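/- For every finite connected simple graph G with at least 2 vertices, the least restricted doubling constant C_G^0 = inf_μ sup_{v ∈ V_G} μ(B(v,1))/μ(v), over all positive weight functions μ, equals 1 + r(A_G), where r(A_G) is the spectral radius of the adjacency matrix of G. -/

import Mathlib

/-!
Let `λ` be the largest eigenvalue of the symmetric nonnegative matrix `A = A_G`. For an eigenvector
`x` of `λ`, `λ ⟨|x|, |x|⟩ = ⟨x, A x⟩ ≤ ⟨|x|, A |x|⟩ ≤ λ ⟨|x|, |x|⟩`, so `y = |x|` is a nonnegative
eigenvector (Perron–Frobenius), and it is positive because `G` is connected. The weight `μ = y`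
has `μ(B(v,1)) / μ(v) = 1 + λ` at every vertex. Conversely, if `A μ ≤ (c - 1) μ` for a positive `μ`,
pairing with `y` gives `λ ⟨y, μ⟩ = ⟨y, A μ⟩ ≤ (c - 1) ⟨y, μ⟩`, hence `1 + λ ≤ c`.
-/

open Finset

namespace Matrix

variable {n : Type*} [Fintype n] [DecidableEq n] {A : Matrix n n ℝ}

lemma IsHermitian.bddAbove_spectrum (hA : A.IsHermitian) : BddAbove (spectrum ℝ A) :=
  hA.spectrum_real_eq_range_eigenvalues ▸ (Set.finite_range _).bddAbove

open scoped MatrixOrder in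
lemma IsHermitian.posSemidef_sSup_spectrum_smul_one_sub (hA : A.IsHermitian) :
    (sSup (spectrum ℝ A) • 1 - A).PosSemidef := by
  rw [← Algebra.algebraMap_eq_smul_one]
  exact le_iff.mp <| le_algebraMap_of_spectrum_le (fun _ hx ↦ le_csSup hA.bddAbove_spectrum hx)
    hA.isSelfAdjoint

lemma dotProduct_smul_one_sub_mulVec {R : Type*} [CommRing R] (B : Matrix n n R) (c : R)
    (x : n → R) : x ⬝ᵥ (c • 1 - B) *ᵥ x = c * (x ⬝ᵥ x) - x ⬝ᵥ B *ᵥ x := by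
  simp only [sub_mulVec, smul_mulVec, one_mulVec, dotProduct_sub, dotProduct_smul, smul_eq_mul]

lemma IsHermitian.dotProduct_mulVec_le (hA : A.IsHermitian) (x : n → ℝ) :
    x ⬝ᵥ A *ᵥ x ≤ sSup (spectrum ℝ A) * (x ⬝ᵥ x) := by
  have := hA.posSemidef_sSup_spectrum_smul_one_sub.dotProduct_mulVec_nonneg x
  rw [star_trivial, dotProduct_smul_one_sub_mulVec] at this
  linarith

lemma IsHermitian.mulVec_eq_sSup_spectrum_smul_of_le (hA : A.IsHermitian) {x : n → ℝ}
    (hx : sSup (spectrum ℝ A) * (x ⬝ᵥ x) ≤ x ⬝ᵥ A *ᵥ x) :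
    A *ᵥ x = sSup (spectrum ℝ A) • x := by
  have hM := hA.posSemidef_sSup_spectrum_smul_one_sub
  have h0 : star x ⬝ᵥ (sSup (spectrum ℝ A) • 1 - A) *ᵥ x = 0 := by
    refine le_antisymm ?_ (hM.dotProduct_mulVec_nonneg x)
    rw [star_trivial, dotProduct_smul_one_sub_mulVec]
    linarith
  rw [hM.dotProduct_mulVec_zero_iff, sub_mulVec, smul_mulVec, one_mulVec, sub_eq_zero] at h0
  exact h0.symm

lemma IsHermitian.exists_mulVec_eq_sSup_spectrum_smul [Nonempty n] (hA : A.IsHermitian) :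
    ∃ x ≠ 0, A *ᵥ x = sSup (spectrum ℝ A) • x := by
  rw [hA.spectrum_real_eq_range_eigenvalues]
  obtain ⟨i, hi⟩ := (Set.range_nonempty hA.eigenvalues).csSup_mem (Set.finite_range _)
  exact ⟨_, (WithLp.ofLp_eq_zero 2).ne.2 <| hA.eigenvectorBasis.orthonormal.ne_zero i,
    hi ▸ hA.mulVec_eigenvectorBasis i⟩

lemma IsHermitian.exists_nonneg_mulVec_eq_sSup_spectrum_smul [Nonempty n] (hA : A.IsHermitian)
    (hA₀ : ∀ i j, 0 ≤ A i j) : ∃ y, 0 ≤ y ∧ y ≠ 0 ∧ A *ᵥ y = sSup (spectrum ℝ A) • y := by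
  obtain ⟨x, hx₀, hx⟩ := hA.exists_mulVec_eq_sSup_spectrum_smul
  refine ⟨|x|, abs_nonneg x, by simpa using hx₀, hA.mulVec_eq_sSup_spectrum_smul_of_le ?_⟩
  have habs : |A *ᵥ x| ≤ A *ᵥ |x| := fun i ↦ by
    simpa [mulVec, dotProduct, abs_mul, abs_of_nonneg (hA₀ _ _)] using
      abs_sum_le_sum_abs (fun j ↦ A i j * x j) univ
  calc sSup (spectrum ℝ A) * (|x| ⬝ᵥ |x|) = x ⬝ᵥ A *ᵥ x := by
        rw [hx, dotProduct_smul, smul_eq_mul]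
        simp only [dotProduct, Pi.abs_apply, abs_mul_abs_self]
    _ ≤ |x| ⬝ᵥ |A *ᵥ x| := sum_le_sum fun i _ ↦ by
        simpa only [Pi.abs_apply, abs_mul] using le_abs_self (x i * (A *ᵥ x) i)
    _ ≤ |x| ⬝ᵥ A *ᵥ |x| := dotProduct_le_dotProduct_of_nonneg_left habs (abs_nonneg x)

lemma le_of_vecMul_eq_smul_of_mulVec_le_smul {m R : Type*} [Fintype m] [Field R] [LinearOrder R]
    [IsStrictOrderedRing R] {B : Matrix m m R} {y μ : m → R} {l c : R} (hy : 0 ≤ y) (hy₀ : y ≠ 0)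
    (hyB : y ᵥ* B = l • y) (hμ : ∀ i, 0 < μ i) (hBμ : B *ᵥ μ ≤ c • μ) : l ≤ c := by
  have hyμ : 0 < y ⬝ᵥ μ := by
    obtain ⟨i, hi⟩ := Function.ne_iff.mp hy₀
    exact sum_pos' (fun j _ ↦ mul_nonneg (hy j) (hμ j).le)
      ⟨i, mem_univ i, mul_pos ((hy i).lt_of_ne' hi) (hμ i)⟩
  refine le_of_mul_le_mul_right ?_ hyμ
  calc l * (y ⬝ᵥ μ) = y ⬝ᵥ B *ᵥ μ := by rw [dotProduct_mulVec, hyB, smul_dotProduct, smul_eq_mul]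
    _ ≤ y ⬝ᵥ c • μ := dotProduct_le_dotProduct_of_nonneg_left hBμ hy
    _ = c * (y ⬝ᵥ μ) := by rw [dotProduct_smul, smul_eq_mul]

end Matrix

namespace SimpleGraph

open Matrix

variable {V R : Type*} (G : SimpleGraph V) [DecidableRel G.Adj]

lemma adjMatrix_nonneg [Zero R] [One R] [Preorder R] [ZeroLEOneClass R] (v w : V) :
    0 ≤ G.adjMatrix R v w := by
  rw [adjMatrix_apply]
  split_ifs
  exacts [zero_le_one, le_rfl]

variable {G} [Fintype V]

lemma Connected.pos_of_adjMatrix_mulVec_eq_smul [Semiring R] [PartialOrder R]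
    [IsOrderedAddMonoid R] (hG : G.Connected) {y : V → R} {c : R} (hy : 0 ≤ y) (hy₀ : y ≠ 0)
    (hGy : G.adjMatrix R *ᵥ y = c • y) (v : V) : 0 < y v := by
  have hstep {u w : V} (huw : G.Adj u w) (hu : y u = 0) : y w = 0 := by
    have : ∑ x ∈ G.neighborFinset u, y x = 0 := by
      rw [← adjMatrix_mulVec_apply, hGy, Pi.smul_apply, hu, smul_zero]
    exact (sum_eq_zero_iff_of_nonneg fun x _ ↦ hy x).mp this w (by simpa using huw)
  have hwalk {u w : V} (p : G.Walk u w) (hu : y u = 0) : y w = 0 := by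
    induction p with
    | nil => exact hu
    | cons huw _ ih => exact ih (hstep huw hu)
  refine (hy v).lt_of_ne' fun hv ↦ hy₀ (funext fun w ↦ ?_)
  exact hwalk (hG.preconnected v w).some hv

variable (G)

/-- `sup_v μ(B(v,1)) / μ(v)`, whose infimum over positive `μ` is the least restricted doubling
constant `C_G^0`. -/
noncomputable def restrictedDoublingRatio (μ : V → ℝ) : ℝ :=
  ⨆ v, (μ v + ∑ w ∈ G.neighborFinset v, μ w) / μ v

lemma restrictedDoublingRatio_eq_of_adjMatrix_mulVec_eq_smul [Nonempty V] {y : V → ℝ} {c : ℝ}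
    (hy : ∀ v, 0 < y v) (hGy : G.adjMatrix ℝ *ᵥ y = c • y) :
    G.restrictedDoublingRatio y = 1 + c := by
  have h (v : V) : (y v + ∑ w ∈ G.neighborFinset v, y w) / y v = 1 + c := by
    rw [← adjMatrix_mulVec_apply, hGy, Pi.smul_apply, smul_eq_mul, div_eq_iff (hy v).ne']
    ring
  simp only [restrictedDoublingRatio, h, ciSup_const]

lemma one_add_sSup_spectrum_le_restrictedDoublingRatio [DecidableEq V] [Nonempty V]
    {μ : V → ℝ} (hμ : ∀ v, 0 < μ v) :
    1 + sSup (spectrum ℝ (G.adjMatrix ℝ)) ≤ G.restrictedDoublingRatio μ := by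
  obtain ⟨y, hy, hy₀, hGy⟩ :=
    (G.isHermitian_adjMatrix ℝ).exists_nonneg_mulVec_eq_sSup_spectrum_smul G.adjMatrix_nonneg
  have hGμ : G.adjMatrix ℝ *ᵥ μ ≤ (G.restrictedDoublingRatio μ - 1) • μ := fun v ↦ by
    have : (μ v + ∑ w ∈ G.neighborFinset v, μ w) / μ v ≤ G.restrictedDoublingRatio μ :=
      le_ciSup (f := fun v ↦ (μ v + ∑ w ∈ G.neighborFinset v, μ w) / μ v)
        (Finite.bddAbove_range _) v
    rw [div_le_iff₀ (hμ v), ← adjMatrix_mulVec_apply] at this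
    simp only [Pi.smul_apply, smul_eq_mul, sub_mul, one_mul]
    linarith
  have hyG : y ᵥ* G.adjMatrix ℝ = sSup (spectrum ℝ (G.adjMatrix ℝ)) • y := by
    rw [← mulVec_transpose, transpose_adjMatrix, hGy]
  linarith [le_of_vecMul_eq_smul_of_mulVec_le_smul hy hy₀ hyG hμ hGμ]

end SimpleGraph

open SimpleGraph in
theorem stmt_2 {V : Type*} [Fintype V] [DecidableEq V] (G : SimpleGraph V)
    [DecidableRel G.Adj] (hG : G.Connected) :
    (⨅ μ : {f : V → ℝ // ∀ v, 0 < f v},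
        ⨆ v : V, (μ.1 v + ∑ w ∈ G.neighborFinset v, μ.1 w) / μ.1 v) =
      1 + sSup (spectrum ℝ (G.adjMatrix ℝ)) := by
  have := hG.nonempty
  obtain ⟨y, hy, hy₀, hGy⟩ :=
    (G.isHermitian_adjMatrix ℝ).exists_nonneg_mulVec_eq_sSup_spectrum_smul G.adjMatrix_nonneg
  have hypos := hG.pos_of_adjMatrix_mulVec_eq_smul hy hy₀ hGy
  have : Nonempty {f : V → ℝ // ∀ v, 0 < f v} := ⟨⟨y, hypos⟩⟩
  have hlower (μ : {f : V → ℝ // ∀ v, 0 < f v}) :=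
    G.one_add_sSup_spectrum_le_restrictedDoublingRatio μ.2
  refine le_antisymm ?_ (le_ciInf hlower)
  exact ciInf_le_of_le ⟨_, Set.forall_mem_range.2 hlower⟩ ⟨y, hypos⟩
    (G.restrictedDoublingRatio_eq_of_adjMatrix_mulVec_eq_smul hypos hGy).le
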